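/- Let X and Y be uniform spaces, let ν ∈ Meas(Y), and let f : X × Y → ℝ be semiuniform. Then the function ν♭f : X → ℝ defined by (ν♭f)(x) = ν(y ↦ f(x,y)) belongs to Ub(X) and ‖ν♭f‖ ≤ ‖ν‖·‖f‖. -/

import Mathlib

noncomputable section

open Filter Topology

/-- `f` is a bounded uniformly continuous real-valued function,
i.e. a member of `Ub(X)`. -/
def IsUb {X : Type*} [UniformSpace X] (f : X → ℝ) : Prop :=
  UniformContinuous f ∧ ∃ C : ℝ, ∀ x, |f x| ≤ C

/-- Supremum norm of a real-valued function. -/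
def supNorm {α : Type*} (f : α → ℝ) : ℝ :=
  sSup (Set.range fun x => |f x|)

/-- `μ` is (the restriction to `Ub(X)` of) a norm-continuous linear functional on `Ub(X)`,
i.e. a member of `Meas(X)`.  It is represented as a bare map on all functions;
only its values on `Ub(X)` are relevant. -/
def IsMeas {X : Type*} [UniformSpace X] (μ : (X → ℝ) → ℝ) : Prop :=
  (∀ f g : X → ℝ, IsUb f → IsUb g → μ (f + g) = μ f + μ g) ∧
  (∀ (c : ℝ) (f : X → ℝ), IsUb f → μ (c • f) = c * μ f) ∧
  (∃ C : ℝ, ∀ f : X → ℝ, IsUb f → (∀ x, |f x| ≤ 1) → |μ f| ≤ C)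

/-- The dual norm on `Meas(X)`:  `‖μ‖ = sup {|μ f| : f ∈ Ub(X), ‖f‖ ≤ 1}`. -/
def measNorm {X : Type*} [UniformSpace X] (μ : (X → ℝ) → ℝ) : ℝ :=
  sSup {r : ℝ | ∃ f : X → ℝ, IsUb f ∧ (∀ x, |f x| ≤ 1) ∧ r = |μ f|}

/-- `μ` is a positive functional:  `μ f ≥ 0` whenever `f ∈ Ub(X)` and `f ≥ 0`. -/
def IsPositive {X : Type*} [UniformSpace X] (μ : (X → ℝ) → ℝ) : Prop :=
  ∀ f : X → ℝ, IsUb f → (∀ x, 0 ≤ f x) → 0 ≤ μ f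

/-- `μ` is a *uniform measure*: on every norm-bounded uniformly equicontinuous set
`H ⊆ Ub(X)`, `μ` is continuous for the topology of pointwise convergence. -/
def IsUniformMeasure {X : Type*} [UniformSpace X] (μ : (X → ℝ) → ℝ) : Prop :=
  ∀ H : Set (X → ℝ),
    (∃ C : ℝ, ∀ f ∈ H, ∀ x, |f x| ≤ C) →
    H.UniformEquicontinuous →
    ∀ f₀ ∈ H, ∀ ε : ℝ, 0 < ε →
      ∃ (K : Finset X) (δ : ℝ), 0 < δ ∧
        ∀ f ∈ H, (∀ x ∈ K, |f x - f₀ x| < δ) → |μ f - μ f₀| < ε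

/-- A *semiuniform* function on `X × Y`, i.e. a member of `Ub(X ⋉ Y)` where `X ⋉ Y` is the
semiuniform product: `f` is bounded, the family of sections `x ↦ f (x, y)` (for `y ∈ Y`)
is uniformly equicontinuous on `X`, and every section `y ↦ f (x, y)` is uniformly
continuous on `Y`. -/
def Semiuniform {X Y : Type*} [UniformSpace X] [UniformSpace Y] (f : X × Y → ℝ) : Prop :=
  (∃ C : ℝ, ∀ p, |f p| ≤ C) ∧
  UniformEquicontinuous (fun y : Y => fun x : X => f (x, y)) ∧
  ∀ x : X, UniformContinuous fun y : Y => f (x, y)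

/-- The direct product `μ ⊗ ν`, evaluated at `f : X × Y → ℝ`:
`(μ ⊗ ν)(f) = μ (x ↦ ν (y ↦ f (x, y)))`. -/
def dirProd {X Y : Type*} (μ : (X → ℝ) → ℝ) (ν : (Y → ℝ) → ℝ) (f : X × Y → ℝ) : ℝ :=
  μ fun x => ν fun y => f (x, y)

/-- Convolution: `(μ ⋆ ν)(f) = μ (x ↦ ν (y ↦ f (x · y)))`. -/
def conv {G : Type*} [Mul G] (μ ν : (G → ℝ) → ℝ) : (G → ℝ) → ℝ :=
  fun f => μ fun x => ν fun y => f (x * y)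

/-- The weak-* topology on `Meas(X)`: the topology of pointwise convergence on `Ub(X)`. -/
def weakStarMeas (X : Type*) [UniformSpace X] :
    TopologicalSpace {ν : (X → ℝ) → ℝ // IsMeas ν} :=
  TopologicalSpace.induced
    (fun ν => fun f : {f : X → ℝ // IsUb f} => ν.1 f.1) Pi.topologicalSpace

/-!
By definition of the dual norm, `|ν g - ν h| ≤ ‖ν‖ · sup |g - h|` on `Ub(Y)`. Applied to the
sections `g = f (x, ·)` this bounds `ν♭f` by `‖ν‖ · ‖f‖`, and since uniform equicontinuity of
`{f (·, y)}` makes `x ↦ f (x, ·)` uniformly continuous for the sup distance, it also makes `ν♭f`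
uniformly continuous.
-/

section Ub

variable {Y : Type*} [UniformSpace Y]

lemma IsUb.const_smul {g : Y → ℝ} (hg : IsUb g) (c : ℝ) : IsUb (c • g) := by
  obtain ⟨hu, C, hC⟩ := hg
  refine ⟨hu.const_smul c, |c| * C, fun y => ?_⟩
  rw [Pi.smul_apply, smul_eq_mul, abs_mul]
  exact mul_le_mul_of_nonneg_left (hC y) (abs_nonneg c)

lemma IsUb.sub {g h : Y → ℝ} (hg : IsUb g) (hh : IsUb h) : IsUb (g - h) := by
  obtain ⟨hu, C, hC⟩ := hg
  obtain ⟨hu', C', hC'⟩ := hh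
  exact ⟨hu.sub hu', C + C', fun y => (abs_sub _ _).trans (add_le_add (hC y) (hC' y))⟩

end Ub

section SupNorm

variable {α : Type*}

lemma supNorm_nonneg (g : α → ℝ) : 0 ≤ supNorm g :=
  Real.sSup_nonneg <| Set.forall_mem_range.2 fun _ => abs_nonneg _

lemma abs_le_supNorm {g : α → ℝ} (hg : ∃ C, ∀ a, |g a| ≤ C) (a : α) : |g a| ≤ supNorm g := by
  obtain ⟨C, hC⟩ := hg
  exact le_csSup ⟨C, Set.forall_mem_range.2 hC⟩ ⟨a, rfl⟩

lemma supNorm_le {g : α → ℝ} {M : ℝ} (hM : 0 ≤ M) (hg : ∀ a, |g a| ≤ M) : supNorm g ≤ M :=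
  Real.sSup_le (Set.forall_mem_range.2 hg) hM

end SupNorm

section Meas

variable {Y : Type*} [UniformSpace Y] {ν : (Y → ℝ) → ℝ}

lemma measNorm_nonneg (ν : (Y → ℝ) → ℝ) : 0 ≤ measNorm ν :=
  Real.sSup_nonneg fun _ ⟨_, _, _, hr⟩ => hr ▸ abs_nonneg _

lemma IsMeas.abs_le_measNorm (hν : IsMeas ν) {g : Y → ℝ} (hg : IsUb g)
    (hg1 : ∀ y, |g y| ≤ 1) : |ν g| ≤ measNorm ν := by
  obtain ⟨C, hC⟩ := hν.2.2
  exact le_csSup ⟨C, fun _ ⟨h, hh, hh1, hr⟩ => hr ▸ hC h hh hh1⟩ ⟨g, hg, hg1, rfl⟩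

lemma IsMeas.map_sub (hν : IsMeas ν) {g h : Y → ℝ} (hg : IsUb g) (hh : IsUb h) :
    ν (g - h) = ν g - ν h := by
  have := hν.1 h (g - h) hh (hg.sub hh)
  rw [add_sub_cancel] at this
  linarith

lemma IsMeas.abs_le_measNorm_mul (hν : IsMeas ν) {g : Y → ℝ} (hg : IsUb g)
    {M : ℝ} (hM : 0 ≤ M) (hgM : ∀ y, |g y| ≤ M) : |ν g| ≤ measNorm ν * M := by
  rcases hM.eq_or_lt with rfl | hM
  · have hg0 : (0 : ℝ) • g = g := funext fun y => by simpa using (abs_nonpos_iff.mp (hgM y)).symm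
    rw [← hg0, hν.2.1 0 g hg]
    simp
  · have hscaled : IsUb (M⁻¹ • g) := hg.const_smul _
    have hscaled1 : ∀ y, |(M⁻¹ • g) y| ≤ 1 := fun y => by
      rw [Pi.smul_apply, smul_eq_mul, abs_mul, abs_inv, abs_of_pos hM, inv_mul_le_iff₀ hM,
        mul_one]
      exact hgM y
    calc |ν g| = |ν (M • M⁻¹ • g)| := by rw [smul_smul, mul_inv_cancel₀ hM.ne', one_smul]
      _ = |ν (M⁻¹ • g)| * M := by rw [hν.2.1 M _ hscaled, abs_mul, abs_of_pos hM, mul_comm]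
      _ ≤ measNorm ν * M := by gcongr; exact hν.abs_le_measNorm hscaled hscaled1

lemma IsMeas.uniformContinuous_comp {X : Type*} [UniformSpace X] (hν : IsMeas ν)
    {F : X → Y → ℝ} (hF : ∀ x, IsUb (F x)) (hequi : UniformEquicontinuous fun y x => F x y) :
    UniformContinuous fun x => ν (F x) := by
  rw [UniformContinuous, Metric.uniformity_basis_dist.tendsto_right_iff]
  intro ε hε
  have hδ : 0 < ε / (measNorm ν + 1) := div_pos hε (by linarith [measNorm_nonneg ν])
  filter_upwards [hequi _ (Metric.dist_mem_uniformity hδ)] with xy hxy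
  have hclose : ∀ y, |(F xy.1 - F xy.2) y| ≤ ε / (measNorm ν + 1) := fun y =>
    (Real.dist_eq _ _ ▸ hxy y).le
  calc dist (ν (F xy.1)) (ν (F xy.2)) = |ν (F xy.1 - F xy.2)| := by
        rw [Real.dist_eq, hν.map_sub (hF _) (hF _)]
    _ ≤ measNorm ν * (ε / (measNorm ν + 1)) :=
        hν.abs_le_measNorm_mul ((hF _).sub (hF _)) hδ.le hclose
    _ < ε := by
        rw [mul_div_assoc', div_lt_iff₀ (by linarith [measNorm_nonneg ν])]
        nlinarith

end Meas

lemma Semiuniform.isUb_section {X Y : Type*} [UniformSpace X] [UniformSpace Y]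
    {f : X × Y → ℝ} (hf : Semiuniform f) (x : X) : IsUb fun y => f (x, y) :=
  ⟨hf.2.2 x, hf.1.elim fun C hC => ⟨C, fun y => hC (x, y)⟩⟩

theorem stmt2 {X Y : Type*} [UniformSpace X] [UniformSpace Y]
    (ν : (Y → ℝ) → ℝ) (hν : IsMeas ν)
    (f : X × Y → ℝ) (hf : Semiuniform f) :
    IsUb (fun x => ν fun y => f (x, y)) ∧
      supNorm (fun x => ν fun y => f (x, y)) ≤ measNorm ν * supNorm f := by
  have hbound : ∀ x, |ν fun y => f (x, y)| ≤ measNorm ν * supNorm f := fun x =>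
    hν.abs_le_measNorm_mul (hf.isUb_section x) (supNorm_nonneg f)
      fun y => abs_le_supNorm hf.1 (x, y)
  refine ⟨⟨hν.uniformContinuous_comp hf.isUb_section hf.2.1, _, hbound⟩, ?_⟩
  exact supNorm_le (mul_nonneg (measNorm_nonneg ν) (supNorm_nonneg f)) hbound
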